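/- Let n ≥ 1, q² = 2^(2n+1), t a positive divisor of 2n+1, and consider elements k ∈ ℤ/((q⁴−1))ℤ with (q²+1) ∤ k, modulo the identification k ~ q²k. The number of such equivalence classes fixed by multiplication by 2^t equals 2^t(2^t−1)/2, and a class {k, q²k} is fixed if and only if k is a multiple of (q⁴−1)/((2^t+1)(2^t−1)). -/
import Mathlib


/-- The unordered pair `{k, q² k}` in `ℤ/(q⁴-1)ℤ`, where `q² = 2^(2n+1)`. -/
def pairClass (n : ℕ) (k : ℕ) : Finset (ZMod (2 ^ (4 * n + 2) - 1)) :=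
  {(k : ZMod (2 ^ (4 * n + 2) - 1)), (2 ^ (2 * n + 1) : ZMod (2 ^ (4 * n + 2) - 1)) * k}

/-- Multiplication by `2^t` on a subset of `ℤ/(q⁴-1)ℤ`. -/
def mulPowTwo (n t : ℕ) (c : Finset (ZMod (2 ^ (4 * n + 2) - 1))) :
    Finset (ZMod (2 ^ (4 * n + 2) - 1)) :=
  c.image (fun x => (2 : ZMod (2 ^ (4 * n + 2) - 1)) ^ t * x)

/-- Representatives `k < q⁴ - 1` with `(q²+1) ∤ k`. -/
def admissible (n : ℕ) : Finset ℕ :=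
  (Finset.range (2 ^ (4 * n + 2) - 1)).filter (fun k => ¬ (2 ^ (2 * n + 1) + 1) ∣ k)

lemma pow_sub_one_dvd_pow_sub_one' {a b : ℕ} (h : a ∣ b) : 2^a - 1 ∣ 2^b - 1 := by
  obtain ⟨c, rfl⟩ := h
  simpa [pow_mul] using Nat.sub_dvd_pow_sub_pow (2^a) 1 c

lemma gcd_two_pow_sub_one (a b : ℕ) :
    Nat.gcd (2^a - 1) (2^b - 1) = 2^(Nat.gcd a b) - 1 := by
  rcases Nat.eq_zero_or_pos a with rfl | ha
  · simp
  rcases Nat.eq_zero_or_pos b with rfl | hb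
  · simp
  set g := Nat.gcd (2^a - 1) (2^b - 1) with hg
  have hgpos : 0 < g := Nat.gcd_pos_of_pos_left _ (by
    have : (2:ℕ)^a ≥ 2 := by
      calc (2:ℕ) = 2^1 := (pow_one 2).symm
      _ ≤ 2^a := Nat.pow_le_pow_right (by norm_num) ha
    omega)
  haveI : NeZero g := ⟨hgpos.ne'⟩
  apply Nat.dvd_antisymm
  · have key : ∀ c : ℕ, g ∣ 2^c - 1 ↔ (2:ZMod g)^c = 1 := by
      intro c
      have h1 : (1:ℕ) ≤ 2^c := Nat.one_le_two_pow
      rw [← ZMod.natCast_eq_zero_iff, Nat.cast_sub h1]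
      push_cast
      constructor
      · intro h; linear_combination h
      · intro h; linear_combination h
    have ha' : (2:ZMod g)^a = 1 := (key a).mp (Nat.gcd_dvd_left _ _)
    have hb' : (2:ZMod g)^b = 1 := (key b).mp (Nat.gcd_dvd_right _ _)
    exact (key _).mpr (orderOf_dvd_iff_pow_eq_one.mp
      (Nat.dvd_gcd (orderOf_dvd_of_pow_eq_one ha') (orderOf_dvd_of_pow_eq_one hb')))
  · exact Nat.dvd_gcd (pow_sub_one_dvd_pow_sub_one' (Nat.gcd_dvd_left a b))
      (pow_sub_one_dvd_pow_sub_one' (Nat.gcd_dvd_right a b))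

lemma dvd_mul_iff_div_gcd (c k : ℕ) {N : ℕ} (hN : 0 < N) :
    N ∣ c * k ↔ N / Nat.gcd c N ∣ k := by
  set g := Nat.gcd c N with hg
  have hgpos : 0 < g := Nat.gcd_pos_of_pos_right c hN
  have hc : g ∣ c := Nat.gcd_dvd_left _ _
  have hn : g ∣ N := Nat.gcd_dvd_right _ _
  have hcop : Nat.Coprime (c / g) (N / g) := Nat.coprime_div_gcd_div_gcd hgpos
  constructor
  · intro h
    have h' : (N / g) * g ∣ ((c / g) * k) * g := by
      rw [Nat.div_mul_cancel hn]
      calc N ∣ c * k := h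
      _ = ((c/g) * k) * g := by rw [mul_right_comm, Nat.div_mul_cancel hc]
    exact Nat.Coprime.dvd_of_dvd_mul_left hcop.symm
      ((Nat.mul_dvd_mul_iff_right hgpos).mp h')
  · intro h
    calc N = g * (N / g) := (Nat.mul_div_cancel' hn).symm
    _ ∣ c * k := mul_dvd_mul hc h

lemma finset_pair_eq {α : Type*} [DecidableEq α] (a b c d : α) :
    ({a, b} : Finset α) = {c, d} ↔ (a = c ∧ b = d) ∨ (a = d ∧ b = c) := by
  rw [← Finset.coe_inj, Finset.coe_insert, Finset.coe_singleton,
    Finset.coe_insert, Finset.coe_singleton, Set.pair_eq_pair_iff]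

lemma cast_inj_of_lt {N : ℕ} [NeZero N] {a b : ℕ} (ha : a < N) (hb : b < N)
    (h : (a : ZMod N) = b) : a = b := by
  have := congrArg ZMod.val h
  rwa [ZMod.val_cast_of_lt ha, ZMod.val_cast_of_lt hb] at this

lemma key_iff (n t : ℕ) (htpos : 0 < t) (hdvd : t ∣ 2*n+1) (k : ℕ) :
    mulPowTwo n t (pairClass n k) = pairClass n k ↔
      ((2 ^ (4 * n + 2) - 1) / ((2 ^ t + 1) * (2 ^ t - 1))) ∣ k := by
  obtain ⟨m, hm⟩ := hdvd
  have hmpos : 0 < m := Nat.pos_of_ne_zero (by rintro rfl; simp at hm)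
  have hmodd : Odd m := by
    rcases Nat.even_or_odd m with he | ho
    · exfalso; obtain ⟨c, hc⟩ := he.mul_left t; omega
    · exact ho
  set T := 2^t with hT
  set Q := 2^(2*n+1) with hQ
  set N := 2^(4*n+2) - 1 with hN
  have hT2 : 2 ≤ T := by
    calc (2:ℕ) = 2^1 := rfl
    _ ≤ T := Nat.pow_le_pow_right (by norm_num) htpos
  have hQ2 : 2 ≤ Q := by
    calc (2:ℕ) = 2^1 := rfl
    _ ≤ Q := Nat.pow_le_pow_right (by norm_num) (by omega)
  have htle : t ≤ 2*n+1 := Nat.le_of_dvd (by omega) ⟨m, hm⟩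
  have hTQ : T ≤ Q := Nat.pow_le_pow_right (by norm_num) htle
  have hQQ : Q^2 = 2^(4*n+2) := by
    rw [hQ, ← pow_mul]; congr 1; ring
  have hNfact : N = (Q+1)*(Q-1) := by
    rw [hN, ← hQQ, show Q^2 - 1 = Q^2 - 1^2 by norm_num, Nat.sq_sub_sq]
  have hQN : Q^2 = N + 1 := by
    rw [hN, ← hQQ]; have : 0 < Q^2 := by positivity
    omega
  have hNpos : 0 < N := by nlinarith [hNfact]
  haveI : NeZero N := ⟨hNpos.ne'⟩
  have hTm : T^m = Q := by rw [hT, hQ, ← pow_mul, hm]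
  have hu : (T+1) ∣ (Q+1) := by
    have h0 := hmodd.nat_add_dvd_pow_add_pow T 1
    rwa [one_pow, hTm] at h0
  have hv : (T-1) ∣ (Q-1) := by
    rw [hT, hQ]; exact pow_sub_one_dvd_pow_sub_one' ⟨m, hm⟩
  set u := (Q+1)/(T+1) with hudef
  set v := (Q-1)/(T-1) with hvdef
  have huu : (T+1)*u = Q+1 := Nat.mul_div_cancel' hu
  have hvv : (T-1)*v = Q-1 := Nat.mul_div_cancel' hv
  set d := u*v with hddef
  have hdfact : N = ((T+1)*(T-1)) * d := by
    rw [hNfact, ← huu, ← hvv, hddef]; ring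
  have hMpos : 0 < (T+1)*(T-1) := Nat.mul_pos (by omega) (by omega)
  have hdval : N / ((T+1)*(T-1)) = d := by
    rw [hdfact, Nat.mul_div_cancel_left _ hMpos]
  have hg1 : Nat.gcd (T-1) N = T-1 := by
    apply Nat.gcd_eq_left
    rw [hT, hN]
    exact pow_sub_one_dvd_pow_sub_one' ⟨2*m, by rw [show t*(2*m)=2*(t*m) by ring, ← hm]; ring⟩
  have hdiv1 : N / (T-1) = (T+1)*d := by
    rw [show N = (T-1)*((T+1)*d) by rw [hdfact]; ring,
      Nat.mul_div_cancel_left _ (show 0 < T-1 by omega)]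
  have hNodd : Odd N := by
    rw [hN]
    have : 2 ∣ 2^(4*n+2) := dvd_pow_self 2 (by omega)
    have h1 : (1:ℕ) ≤ 2^(4*n+2) := Nat.one_le_two_pow
    rcases this with ⟨c, hc⟩
    exact ⟨c - 1, by omega⟩
  have hcopTN : Nat.Coprime T N := Nat.Coprime.pow_left t (Nat.coprime_two_left.mpr hNodd)
  have hg2 : Nat.gcd (Q-T) N = (T+1)*(T-1) := by
    have he : t + ((2*n+1) - t) = 2*n+1 := by omega
    have hQT : Q = T * 2^((2*n+1)-t) := by rw [hT, hQ, ← pow_add, he]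
    have hw : Q - T = T * (2^((2*n+1)-t) - 1) := by
      rw [hQT, Nat.mul_sub, mul_one]
    rw [hw, Nat.Coprime.gcd_mul_left_cancel _ hcopTN, hN, gcd_two_pow_sub_one]
    have hgcd_exp : Nat.gcd ((2*n+1)-t) (4*n+2) = 2*t := by
      have h1 : (2*n+1) - t = t*(m-1) := by
        have := hm; rw [this, Nat.mul_sub, mul_one]
      have h2 : 4*n+2 = t*(2*m) := by rw [show t*(2*m)=2*(t*m) by ring, ← hm]; ring
      rw [h1, h2, Nat.gcd_mul_left]
      have h3 : Nat.gcd (m-1) (2*m) = 2 := by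
        have h4 : 2*m = 2 + (m-1)*2 := by omega
        rw [h4, Nat.gcd_add_mul_left_right (m-1) 2 2]
        have h5 : 2 ∣ m - 1 := by obtain ⟨r, hr⟩ := hmodd; omega
        rw [Nat.gcd_comm]; exact Nat.gcd_eq_left h5
      rw [h3]; ring
    rw [hgcd_exp]
    have : (2:ℕ)^(2*t) = T^2 := by rw [hT, ← pow_mul]; congr 1; ring
    rw [this, show T^2 - 1 = T^2 - 1^2 by norm_num, Nat.sq_sub_sq]
  have hQsq : (2 : ZMod N)^(2*n+1) * (2 : ZMod N)^(2*n+1) = 1 := by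
    rw [← pow_add, show (2*n+1)+(2*n+1) = 4*n+2 by ring]
    have : ((2^(4*n+2) : ℕ) : ZMod N) = ((N + 1 : ℕ) : ZMod N) := by
      congr 1; rw [hN]; have : (1:ℕ) ≤ 2^(4*n+2) := Nat.one_le_two_pow; omega
    push_cast at this
    rw [ZMod.natCast_self] at this
    rw [this]; ring
  simp only [mulPowTwo, pairClass, Finset.image_insert, Finset.image_singleton]
  set TT := (2 : ZMod N)^t with hTT
  set QQ := (2 : ZMod N)^(2*n+1) with hQQ'
  set a : ZMod N := (k : ZMod N) with ha
  have step1 : ({TT * a, TT * (QQ * a)} : Finset (ZMod N)) = {a, QQ * a} ↔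
      (TT * a = a ∨ TT * a = QQ * a) := by
    rw [finset_pair_eq]
    constructor
    · rintro (⟨h1, _⟩ | ⟨h1, _⟩)
      · exact Or.inl h1
      · exact Or.inr h1
    · rintro (h | h)
      · exact Or.inl ⟨h, by rw [mul_left_comm, h]⟩
      · exact Or.inr ⟨h, by rw [mul_left_comm, h, ← mul_assoc, hQsq, one_mul]⟩
  have hTa : TT * a = ((T*k : ℕ) : ZMod N) := by rw [hTT, ha, hT]; push_cast; ring
  have hQa : QQ * a = ((Q*k : ℕ) : ZMod N) := by rw [hQQ', ha, hQ]; push_cast; ring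
  have step2 : (TT * a = a) ↔ N ∣ (T-1)*k := by
    rw [hTa, ha, ZMod.natCast_eq_natCast_iff]
    have hkle : k ≤ T*k := Nat.le_mul_of_pos_left k (by omega)
    have hsub : T*k - k = (T-1)*k := by rw [Nat.sub_mul, one_mul]
    constructor
    · intro h; rw [← hsub]; exact (Nat.modEq_iff_dvd' hkle).mp h.symm
    · intro h; exact ((Nat.modEq_iff_dvd' hkle).mpr (hsub ▸ h)).symm
  have step3 : (TT * a = QQ * a) ↔ N ∣ (Q-T)*k := by
    rw [hTa, hQa, ZMod.natCast_eq_natCast_iff]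
    have hkle : T*k ≤ Q*k := Nat.mul_le_mul_right k hTQ
    have hsub : Q*k - T*k = (Q-T)*k := by rw [Nat.sub_mul]
    constructor
    · intro h; rw [← hsub]; exact (Nat.modEq_iff_dvd' hkle).mp h
    · intro h; exact (Nat.modEq_iff_dvd' hkle).mpr (hsub ▸ h)
  rw [step1, step2, step3, dvd_mul_iff_div_gcd _ _ hNpos, dvd_mul_iff_div_gcd _ _ hNpos,
    hg1, hg2, hdiv1, hdval]
  constructor
  · rintro (h | h)
    · exact dvd_trans (Dvd.intro_left (T+1) rfl) h
    · exact h
  · exact Or.inr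

theorem count_classes_PaI4 (n t : ℕ) (hn : 1 ≤ n) (htpos : 0 < t)
    (hdvd : t ∣ 2 * n + 1) :
    (((admissible n).image (pairClass n)).filter
        (fun c => mulPowTwo n t c = c)).card = 2 ^ t * (2 ^ t - 1) / 2 ∧
    ∀ k ∈ admissible n,
      (mulPowTwo n t (pairClass n k) = pairClass n k ↔
        ((2 ^ (4 * n + 2) - 1) / ((2 ^ t + 1) * (2 ^ t - 1))) ∣ k) := by
  classical
  have hdvd' : t ∣ 2*n+1 := hdvd
  refine ⟨?_, fun k _ => key_iff n t htpos hdvd' k⟩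
  obtain ⟨m, hm⟩ := hdvd'
  have hmpos : 0 < m := Nat.pos_of_ne_zero (by rintro rfl; simp at hm)
  have hmodd : Odd m := by
    rcases Nat.even_or_odd m with he | ho
    · exfalso; obtain ⟨c, hc⟩ := he.mul_left t; omega
    · exact ho
  set T := 2^t with hT
  set Q := 2^(2*n+1) with hQ
  set N := 2^(4*n+2) - 1 with hN
  have hT2 : 2 ≤ T := by
    calc (2:ℕ) = 2^1 := rfl
    _ ≤ T := Nat.pow_le_pow_right (by norm_num) htpos
  have hQ2 : 2 ≤ Q := by
    calc (2:ℕ) = 2^1 := rfl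
    _ ≤ Q := Nat.pow_le_pow_right (by norm_num) (by omega)
  have htle : t ≤ 2*n+1 := Nat.le_of_dvd (by omega) ⟨m, hm⟩
  have hQQ : Q^2 = 2^(4*n+2) := by
    rw [hQ, ← pow_mul]; congr 1; ring
  have hNfact : N = (Q+1)*(Q-1) := by
    rw [hN, ← hQQ, show Q^2 - 1 = Q^2 - 1^2 by norm_num, Nat.sq_sub_sq]
  have hNpos : 0 < N := hNfact ▸ Nat.mul_pos (by omega) (by omega)
  haveI : NeZero N := ⟨hNpos.ne'⟩
  have hTm : T^m = Q := by rw [hT, hQ, ← pow_mul, hm]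
  have hu : (T+1) ∣ (Q+1) := by
    have h0 := hmodd.nat_add_dvd_pow_add_pow T 1
    rwa [one_pow, hTm] at h0
  have hv : (T-1) ∣ (Q-1) := by
    rw [hT, hQ]; exact pow_sub_one_dvd_pow_sub_one' ⟨m, hm⟩
  set u := (Q+1)/(T+1) with hudef
  set v := (Q-1)/(T-1) with hvdef
  have huu : (T+1)*u = Q+1 := Nat.mul_div_cancel' hu
  have hvv : (T-1)*v = Q-1 := Nat.mul_div_cancel' hv
  set d := u*v with hddef
  have hdfact : N = ((T+1)*(T-1)) * d := by
    rw [hNfact, ← huu, ← hvv, hddef]; ring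
  have hMpos : 0 < (T+1)*(T-1) := Nat.mul_pos (by omega) (by omega)
  have hdval : N / ((T+1)*(T-1)) = d := by
    rw [hdfact, Nat.mul_div_cancel_left _ hMpos]
  have hupos : 0 < u := by
    rcases Nat.eq_zero_or_pos u with h | h
    · rw [h, mul_zero] at huu; omega
    · exact h
  have hvpos : 0 < v := by
    rcases Nat.eq_zero_or_pos v with h | h
    · rw [h, mul_zero] at hvv; omega
    · exact h
  have hdpos : 0 < d := Nat.mul_pos hupos hvpos
  -- coprimality of (T+1) and v
  have hcop : Nat.Coprime (T+1) v := by
    have hg0 : Nat.gcd (Q-1) (T+1) ∣ T - 1 := by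
      have h1 : (T+1) ∣ 2^(2*t) - 1 := by
        have h2T : (2:ℕ)^(2*t) = T^2 := by rw [hT, ← pow_mul]; congr 1; ring
        rw [h2T, show T^2 - 1 = T^2 - 1^2 by norm_num, Nat.sq_sub_sq]
        exact Dvd.intro _ rfl
      have h2 : Nat.gcd (Q-1) (T+1) ∣ Nat.gcd (2^(2*n+1)-1) (2^(2*t)-1) := by
        apply Nat.dvd_gcd
        · rw [← hQ]; exact Nat.gcd_dvd_left _ _
        · exact dvd_trans (Nat.gcd_dvd_right _ _) h1
      rw [gcd_two_pow_sub_one] at h2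
      have h3 : Nat.gcd (2*n+1) (2*t) = t := by
        have hodd : Nat.Coprime 2 (2*n+1) := Nat.coprime_two_left.mpr (odd_two_mul_add_one n)
        rw [Nat.Coprime.gcd_mul_left_cancel_right _ hodd, Nat.gcd_comm]
        exact Nat.gcd_eq_left ⟨m, hm⟩
      rwa [h3, ← hT] at h2
    have hg1 : Nat.gcd (Q-1) (T+1) ∣ 2 := by
      have ha := Nat.gcd_dvd_right (Q-1) (T+1)
      have := Nat.dvd_sub ha hg0
      rwa [show T+1 - (T-1) = 2 by omega] at this
    have hg2 : Nat.gcd (Q-1) (T+1) = 1 := by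
      rcases (Nat.dvd_prime Nat.prime_two).mp hg1 with h | h
      · exact h
      · exfalso
        have hdd := Nat.gcd_dvd_right (Q-1) (T+1)
        rw [h] at hdd
        have hTeven : 2 ∣ T := by rw [hT]; exact dvd_pow_self 2 htpos.ne'
        omega
    have hvc : Nat.Coprime v (T+1) :=
      Nat.Coprime.coprime_dvd_left (Dvd.intro_left _ hvv) hg2
    exact hvc.symm
  -- rewrite the filtered set
  have hkey' : ∀ k : ℕ, (mulPowTwo n t (pairClass n k) = pairClass n k ↔ d ∣ k) := by
    intro k
    rw [key_iff n t htpos ⟨m, hm⟩ k, ← hN, ← hT, hdval]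
  set S := (admissible n).filter (fun k => d ∣ k) with hSdef
  have hrw : ((admissible n).image (pairClass n)).filter (fun c => mulPowTwo n t c = c)
      = S.image (pairClass n) := by
    rw [Finset.filter_image, hSdef]
    congr 1
    apply Finset.filter_congr
    intro k _
    exact hkey' k
  rw [hrw]
  -- membership in S
  have hmemS : ∀ k : ℕ, k ∈ S ↔ k < N ∧ ¬ (Q+1) ∣ k ∧ d ∣ k := by
    intro k
    simp only [hSdef, admissible, Finset.mem_filter, Finset.mem_range]
    rw [← hN, ← hQ]
    tauto
  -- S as image
  have hS_image : S = ((Finset.range ((T+1)*(T-1))).filter (fun j => ¬ (T+1) ∣ j)).image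
      (fun j => j * d) := by
    ext k
    rw [hmemS]
    simp only [Finset.mem_image, Finset.mem_filter, Finset.mem_range]
    constructor
    · rintro ⟨hklt, hknd, ⟨j, rfl⟩⟩
      refine ⟨j, ⟨?_, ?_⟩, mul_comm j d ▸ rfl⟩
      · have hlt : d * j < d * ((T+1)*(T-1)) := by
          calc d * j < N := hklt
          _ = d * ((T+1)*(T-1)) := by rw [hdfact]; ring
        exact Nat.lt_of_mul_lt_mul_left hlt
      · rintro ⟨i, rfl⟩
        exact hknd ⟨v*i, by rw [← huu, hddef]; ring⟩
    · rintro ⟨j, ⟨hjlt, hjnd⟩, rfl⟩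
      refine ⟨?_, ?_, dvd_mul_left d j⟩
      · rw [hdfact]
        exact (Nat.mul_lt_mul_right hdpos).mpr hjlt
      · rintro ⟨c, hc⟩
        apply hjnd
        have h1 : (j*v)*u = ((T+1)*c)*u := by
          rw [show (j*v)*u = j*(u*v) by ring, ← hddef, hc, ← huu]; ring
        have h2 : j*v = (T+1)*c := Nat.eq_of_mul_eq_mul_right hupos h1
        exact hcop.dvd_of_dvd_mul_right ⟨c, h2⟩
  -- card of S
  have hScard : S.card = T*(T-1) := by
    rw [hS_image, Finset.card_image_of_injective _
      (fun a b h => Nat.eq_of_mul_eq_mul_right hdpos h)]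
    have hfilt : (Finset.range ((T+1)*(T-1))).filter (fun j => (T+1) ∣ j)
        = (Finset.range (T-1)).image (fun i => i * (T+1)) := by
      ext j
      simp only [Finset.mem_image, Finset.mem_filter, Finset.mem_range]
      constructor
      · rintro ⟨hjlt, ⟨i, rfl⟩⟩
        exact ⟨i, Nat.lt_of_mul_lt_mul_left hjlt, mul_comm i (T+1)⟩
      · rintro ⟨i, hilt, rfl⟩
        refine ⟨?_, Dvd.intro_left _ rfl⟩
        rw [mul_comm (T+1) (T-1)]
        exact (Nat.mul_lt_mul_right (show 0 < T+1 by omega)).mpr hilt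
    have hsplit := Finset.card_filter_add_card_filter_not
      (s := Finset.range ((T+1)*(T-1))) (p := fun j => (T+1) ∣ j)
    rw [hfilt, Finset.card_image_of_injective _
      (fun a b h => Nat.eq_of_mul_eq_mul_right (show 0 < T+1 by omega) h),
      Finset.card_range, Finset.card_range] at hsplit
    have hsm : (T+1)*(T-1) = T*(T-1) + (T-1) := by rw [Nat.succ_mul]
    omega
  -- pair equality characterization
  have hQsq : (2 : ZMod N)^(2*n+1) * (2 : ZMod N)^(2*n+1) = 1 := by
    rw [← pow_add, show (2*n+1)+(2*n+1) = 4*n+2 by ring]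
    have h0 : ((2^(4*n+2) : ℕ) : ZMod N) = ((N + 1 : ℕ) : ZMod N) := by
      congr 1; rw [hN]; have : (1:ℕ) ≤ 2^(4*n+2) := Nat.one_le_two_pow; omega
    push_cast at h0
    rw [ZMod.natCast_self] at h0
    rw [h0]; ring
  have hcast : ∀ k1 k2 : ℕ, pairClass n k1 = pairClass n k2 ↔
      ((k1 : ZMod N) = k2 ∨ (k1 : ZMod N) = (2:ZMod N)^(2*n+1) * k2) := by
    intro k1 k2
    simp only [pairClass]
    rw [finset_pair_eq]
    constructor
    · rintro (⟨h1, _⟩ | ⟨h1, _⟩)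
      · exact Or.inl h1
      · exact Or.inr h1
    · rintro (h | h)
      · exact Or.inl ⟨h, by rw [h]⟩
      · exact Or.inr ⟨h, by rw [h, ← mul_assoc, hQsq, one_mul]⟩
  have hQN' : (Q+1) ∣ N := ⟨Q-1, hNfact⟩
  have hdN : d ∣ N := ⟨(T+1)*(T-1), by rw [hdfact]; ring⟩
  have hcopQ : Nat.Coprime (Q+1) Q := by
    simpa using Nat.coprime_succ_self_left (n := Q)
  -- fibers have cardinality 2
  have hfiber : ∀ b ∈ S.image (pairClass n),
      (S.filter (fun k => pairClass n k = b)).card = 2 := by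
    intro b hb
    obtain ⟨k0, hk0S, rfl⟩ := Finset.mem_image.mp hb
    obtain ⟨hk0lt, hk0nd, hk0d⟩ := (hmemS k0).mp hk0S
    set k0' := (Q * k0) % N with hk0'def
    have hk0'lt : k0' < N := Nat.mod_lt _ hNpos
    have hcast0 : (k0' : ZMod N) = (2:ZMod N)^(2*n+1) * k0 := by
      rw [hk0'def, ZMod.natCast_mod, hQ]; push_cast; ring
    have hk0'S : k0' ∈ S := by
      rw [hmemS]
      refine ⟨hk0'lt, ?_, ?_⟩
      · rw [hk0'def, Nat.dvd_mod_iff hQN']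
        intro hcon
        exact hk0nd (hcopQ.dvd_of_dvd_mul_left hcon)
      · rw [hk0'def, Nat.dvd_mod_iff hdN]
        exact Dvd.dvd.mul_left hk0d Q
    have hne : k0 ≠ k0' := by
      intro heq
      have h1 : (k0 : ZMod N) = ((Q*k0 : ℕ) : ZMod N) := by
        conv_lhs => rw [heq]
        rw [hcast0, hQ]; push_cast; ring
      rw [ZMod.natCast_eq_natCast_iff] at h1
      have hkle : k0 ≤ Q*k0 := Nat.le_mul_of_pos_left k0 (by omega)
      have h2 : N ∣ Q*k0 - k0 := (Nat.modEq_iff_dvd' hkle).mp h1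
      have hsub : Q*k0 - k0 = (Q-1)*k0 := by rw [Nat.sub_mul, one_mul]
      rw [hsub, hNfact] at h2
      obtain ⟨c, hc⟩ := h2
      apply hk0nd
      refine ⟨c, Nat.eq_of_mul_eq_mul_left (show 0 < Q-1 by omega) ?_⟩
      calc (Q-1) * k0 = (Q+1)*(Q-1)*c := hc
      _ = (Q-1) * ((Q+1)*c) := by ring
    have hfix : pairClass n k0' = pairClass n k0 := by
      rw [hcast k0' k0]
      exact Or.inr hcast0
    have hset : S.filter (fun k => pairClass n k = pairClass n k0) = {k0, k0'} := by
      ext k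
      simp only [Finset.mem_filter, Finset.mem_insert, Finset.mem_singleton]
      constructor
      · rintro ⟨hkS, hfk⟩
        obtain ⟨hklt, -, -⟩ := (hmemS k).mp hkS
        rcases (hcast k k0).mp hfk with h | h
        · exact Or.inl (cast_inj_of_lt hklt hk0lt h)
        · exact Or.inr (cast_inj_of_lt hklt hk0'lt (by rw [h, ← hcast0]))
      · rintro (rfl | rfl)
        · exact ⟨hk0S, rfl⟩
        · exact ⟨hk0'S, hfix⟩
    rw [hset, Finset.card_pair hne]
  -- conclude
  have hsum := Finset.card_eq_sum_card_image (pairClass n) S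
  rw [Finset.sum_congr rfl hfiber, Finset.sum_const, smul_eq_mul] at hsum
  rw [hScard] at hsum
  omega
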